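/- arXiv:1305.4435 — 2 statements merged into one kernel-verified Lean document; each statement's English description precedes it below -/
import Mathlib

section
/- The kernel of the ring homomorphism C[x,y,z] → C[t] sending x ↦ t^3, y ↦ t^4, z ↦ t^5 is the ideal generated by the three binomials y^2 − xz, x^2 y − z^2, and x^3 − yz. -/
/-!
Modulo the three binomials we have y² ≡ xz, yz ≡ x³ and z² ≡ x²y, so every polynomial in
x, y, z reduces to a(x) + b(x)y + c(x)z. Under x, y, z ↦ t³, t⁴, t⁵ this goes to
a(t³) + b(t³)t⁴ + c(t³)t⁵, whose three summands only involve exponents in the distinct residue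
classes 0, 1, 2 mod 3; so it vanishes only if a = b = c = 0.
-/

open Polynomial

theorem Polynomial.coeff_expand_mul_X_pow {R : Type*} [CommSemiring R] {p : ℕ} (hp : 0 < p)
    (f : R[X]) (r n : ℕ) :
    (expand R p f * X ^ r).coeff n = if r ≤ n ∧ p ∣ n - r then f.coeff ((n - r) / p) else 0 := by
  rw [coeff_mul_X_pow', coeff_expand hp]
  split_ifs <;> tauto

theorem Polynomial.eq_zero_of_expand_three_add_mul_X_four_add_mul_X_five_eq_zero
    {R : Type*} [CommSemiring R] {a b c : R[X]}
    (h : expand R 3 a + expand R 3 b * X ^ 4 + expand R 3 c * X ^ 5 = 0) :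
    a = 0 ∧ b = 0 ∧ c = 0 := by
  have hcoeff (n : ℕ) : (expand R 3 a * X ^ 0).coeff n + (expand R 3 b * X ^ 4).coeff n
      + (expand R 3 c * X ^ 5).coeff n = 0 := by
    rw [pow_zero, mul_one, ← coeff_add, ← coeff_add, h, coeff_zero]
  simp only [coeff_expand_mul_X_pow three_pos] at hcoeff
  refine ⟨?_, ?_, ?_⟩ <;> ext k
  · have h0 := hcoeff (3 * k)
    rw [if_pos (by omega), if_neg (by omega), if_neg (by omega)] at h0
    simpa using h0
  · have h4 := hcoeff (3 * k + 4)
    rw [if_neg (by omega), if_pos (by omega), if_neg (by omega)] at h4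
    simpa using h4
  · have h5 := hcoeff (3 * k + 5)
    rw [if_neg (by omega), if_neg (by omega), if_pos (by omega)] at h5
    simpa using h5

theorem Polynomial.aeval_X_pow_eq_expand {R : Type*} [CommSemiring R] (p : ℕ) (f : R[X]) :
    aeval (X ^ p) f = expand R p f := by
  rw [← expand_aeval, aeval_X_left_apply]

namespace MonomialCurve345

variable (R : Type*) [CommRing R]

noncomputable def param : MvPolynomial (Fin 3) R →ₐ[R] R[X] :=
  MvPolynomial.aeval ![X ^ 3, X ^ 4, X ^ 5]

noncomputable def ideal : Ideal (MvPolynomial (Fin 3) R) :=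
  Ideal.span {MvPolynomial.X 1 ^ 2 - MvPolynomial.X 0 * MvPolynomial.X 2,
    MvPolynomial.X 0 ^ 2 * MvPolynomial.X 1 - MvPolynomial.X 2 ^ 2,
    MvPolynomial.X 0 ^ 3 - MvPolynomial.X 1 * MvPolynomial.X 2}

theorem ideal_le_ker_param : ideal R ≤ RingHom.ker (param R) := by
  rw [ideal, Ideal.span_le]
  rintro g (rfl | rfl | rfl) <;>
    simp [param] <;> ring

abbrev CoordRing := MvPolynomial (Fin 3) R ⧸ ideal R

variable {R} in
noncomputable abbrev gen (i : Fin 3) : CoordRing R :=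
  Ideal.Quotient.mk (ideal R) (MvPolynomial.X i)

theorem gen_one_sq : gen 1 ^ 2 = (gen 0 * gen 2 : CoordRing R) := by
  rw [← map_pow, ← map_mul, Ideal.Quotient.eq]
  exact Ideal.subset_span (by simp)

theorem gen_one_mul_gen_two : gen 1 * gen 2 = (gen 0 ^ 3 : CoordRing R) := by
  rw [eq_comm, ← map_pow, ← map_mul, Ideal.Quotient.eq]
  exact Ideal.subset_span (by simp)

theorem gen_two_sq : gen 2 ^ 2 = (gen 0 ^ 2 * gen 1 : CoordRing R) := by
  rw [eq_comm, ← map_pow, ← map_mul, ← map_pow, Ideal.Quotient.eq]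
  exact Ideal.subset_span (by simp)

variable {R} in
theorem exists_eq_aeval_add_aeval_mul_add_aeval_mul (q : CoordRing R) :
    ∃ a b c : R[X], q = aeval (gen 0) a + aeval (gen 0) b * gen 1 + aeval (gen 0) c * gen 2 := by
  obtain ⟨f, rfl⟩ := Ideal.Quotient.mk_surjective q
  induction f using MvPolynomial.induction_on with
  | C r => exact ⟨C r, 0, 0, by simpa using Ideal.Quotient.mk_algebraMap R (ideal R) r⟩
  | add f g hf hg =>
    obtain ⟨a, b, c, hf⟩ := hf
    obtain ⟨a', b', c', hg⟩ := hg
    exact ⟨a + a', b + b', c + c', by rw [map_add, hf, hg]; simp only [map_add]; ring⟩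
  | mul_X f i hf =>
    obtain ⟨a, b, c, hf⟩ := hf
    rw [map_mul, hf]
    fin_cases i <;> simp only [Fin.zero_eta, Fin.mk_one, Fin.reduceFinMk]
    · refine ⟨a * X, b * X, c * X, ?_⟩
      simp only [map_mul, aeval_X]
      ring
    · refine ⟨c * X ^ 3, a, b * X, ?_⟩
      simp only [map_mul, map_pow, aeval_X]
      linear_combination aeval (gen 0) b * gen_one_sq R + aeval (gen 0) c * gen_one_mul_gen_two R
    · refine ⟨b * X ^ 3, c * X ^ 2, a, ?_⟩
      simp only [map_mul, map_pow, aeval_X]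
      linear_combination
        aeval (gen 0) b * gen_one_mul_gen_two R + aeval (gen 0) c * gen_two_sq R

theorem ker_param : RingHom.ker (param R) = ideal R := by
  refine le_antisymm (fun f hf => ?_) (ideal_le_ker_param R)
  let φ := Ideal.Quotient.liftₐ (ideal R) (param R) fun _ h => ideal_le_ker_param R h
  have hφ (i : Fin 3) : φ (gen i) = ![X ^ 3, X ^ 4, X ^ 5] i := MvPolynomial.aeval_X _ i
  obtain ⟨a, b, c, habc⟩ := exists_eq_aeval_add_aeval_mul_add_aeval_mul
    (Ideal.Quotient.mk (ideal R) f)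
  have himage : expand R 3 a + expand R 3 b * X ^ 4 + expand R 3 c * X ^ 5 = 0 := by
    have hφf : φ (Ideal.Quotient.mk (ideal R) f) = 0 := hf
    rw [habc] at hφf
    simpa [← aeval_algHom_apply, hφ, aeval_X_pow_eq_expand] using hφf
  obtain ⟨rfl, rfl, rfl⟩ := eq_zero_of_expand_three_add_mul_X_four_add_mul_X_five_eq_zero himage
  rw [← Ideal.Quotient.eq_zero_iff_mem, habc]
  simp

end MonomialCurve345

/-- The kernel of the map ℂ[x,y,z] → ℂ[t], x ↦ t³, y ↦ t⁴, z ↦ t⁵, is generated by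
y² − xz, x²y − z², x³ − yz. -/
theorem stmt3 :
    RingHom.ker (MvPolynomial.aeval
        ![(Polynomial.X : Polynomial ℂ) ^ 3, Polynomial.X ^ 4, Polynomial.X ^ 5] :
      MvPolynomial (Fin 3) ℂ →ₐ[ℂ] Polynomial ℂ) =
    Ideal.span {(MvPolynomial.X 1) ^ 2 - MvPolynomial.X 0 * MvPolynomial.X 2,
      (MvPolynomial.X 0) ^ 2 * MvPolynomial.X 1 - (MvPolynomial.X 2) ^ 2,
      (MvPolynomial.X 0) ^ 3 - MvPolynomial.X 1 * MvPolynomial.X 2} :=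
  MonomialCurve345.ker_param ℂ
end

section
/- Let X be an m×n generic matrix with m ≤ n and let I_r(X) be the ideal of r×r minors. Johnson's formula J(I_r(X)^c) = ∩_{i=1}^{r} I_i(X)^{(⌊c(r+1−i)⌋ + 1 − (n−i+1)(m−i+1))} implies that the log canonical threshold of I_r(X) equals min_{1 ≤ i ≤ r} (n−i+1)(m−i+1)/(r+1−i). In particular, for a 4×5 generic matrix, lct(I_2(X)) = 10 and lct(I_3(X)) = 6. -/
/-! For each `i`, the exponent `⌊c k⌋ + 1 - N` (with `k = r + 1 - i ≥ 1` and
`N = (n - i + 1)(m - i + 1) ≥ 1`) is positive exactly when `N ≤ c k`, i.e. when `c ≥ N / k`. -/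

theorem isLeast_floor_mul_threshold {K : Type*} [Field K] [LinearOrder K] [IsStrictOrderedRing K]
    [FloorRing K] {k : K} {N : ℤ} (hk : 0 < k) (hN : 0 < N) :
    IsLeast {c : K | 0 < c ∧ 0 < ⌊c * k⌋ + 1 - N} (N / k) := by
  have hNk : (0 : K) < N / k := div_pos (Int.cast_pos.mpr hN) hk
  have hset : {c : K | 0 < c ∧ 0 < ⌊c * k⌋ + 1 - N} = Set.Ici ((N : K) / k) := by
    ext c
    rw [Set.mem_ofPred_eq, Set.mem_Ici, show 0 < ⌊c * k⌋ + 1 - N ↔ N ≤ ⌊c * k⌋ by omega,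
      Int.le_floor, ← div_le_iff₀ hk]
    exact ⟨And.right, fun h => ⟨hNk.trans_le h, h⟩⟩
  exact hset ▸ isLeast_Ici

/-- Johnson's formula 𝒥(I_r(X)^c) = ∩_{i=1}^r I_i(X)^(⌊c(r+1−i)⌋ + 1 − (n−i+1)(m−i+1))
implies that lct(I_r(X)) = min_{1≤i≤r} (n−i+1)(m−i+1)/(r+1−i): for each i, the least
c > 0 making the exponent ⌊c(r+1−i)⌋ + 1 − (n−i+1)(m−i+1) positive is
(n−i+1)(m−i+1)/(r+1−i).  In particular, for a 4×5 generic matrix this minimum is 10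
for r = 2 and 6 for r = 3, so lct(I₂(X)) = 10 and lct(I₃(X)) = 6. -/
theorem stmt10 (m n r : ℕ) (hrm : r ≤ m) (hmn : m ≤ n) :
    (∀ i ∈ Finset.Icc 1 r,
      IsLeast {c : ℚ | 0 < c ∧
          0 < ⌊c * ((r : ℚ) + 1 - (i : ℚ))⌋ + 1 - ((n : ℤ) - i + 1) * ((m : ℤ) - i + 1)}
        (((n : ℚ) - i + 1) * ((m : ℚ) - i + 1) / ((r : ℚ) + 1 - i))) ∧
    (Finset.Icc 1 2).inf' (by norm_num)
        (fun i : ℕ => ((5 : ℚ) - i + 1) * ((4 : ℚ) - i + 1) / ((2 : ℚ) + 1 - i)) = 10 ∧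
    (Finset.Icc 1 3).inf' (by norm_num)
        (fun i : ℕ => ((5 : ℚ) - i + 1) * ((4 : ℚ) - i + 1) / ((3 : ℚ) + 1 - i)) = 6 := by
  refine ⟨fun i hi => ?_, by norm_num [show Finset.Icc 1 2 = {1, 2} by rfl],
    by norm_num [show Finset.Icc 1 3 = {1, 2, 3} by rfl]⟩
  obtain ⟨-, hir⟩ := Finset.mem_Icc.mp hi
  have hk : (0 : ℚ) < r + 1 - i := by
    have : (i : ℚ) ≤ r := by exact_mod_cast hir
    linarith
  have hN : 0 < ((n : ℤ) - i + 1) * ((m : ℤ) - i + 1) := by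
    apply mul_pos <;> omega
  simpa using isLeast_floor_mul_threshold hk hN
end
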